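/- arXiv:1610.07945 — 3 statements merged into one kernel-verified Lean document; each statement's English description precedes it below -/
import Mathlib

section
/- For every integer n ≥ 2, the Bernoulli polynomial B_n(x) has exactly one root in the interval [0, 1/2) and exactly one root in the interval [1/2, 1). -/
/-!
For `m ≥ 1` the odd polynomial `B_{2m+1}` vanishes at `0` and at `1/2`. By induction on `m`,
`B_{2m+1}` has no zero in `(0, 1/2)`: if it has none, then by Rolle's theorem its antiderivative
`B_{2m+2}` (up to a constant factor) is injective on `[0, 1/2]`, while a zero of `B_{2m+3}` inside
`(0, 1/2)` would give, by Rolle on either side of it, two distinct zeros of `B_{2m+2}` there.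
Rolle applied to `B_{2m+3}` on `[0, 1/2]` also produces the zero of `B_{2m+2}`, which is then the
only one in `[0, 1/2]`. The reflection `B_n(1 - x) = (-1)^n B_n(x)` carries everything over to
`[1/2, 1]`.
-/

open HurwitzZeta Polynomial Set

noncomputable def bernoulliPoly (n : ℕ) (x : ℝ) : ℝ := Polynomial.aeval x (Polynomial.bernoulli n)

theorem bernoulliPoly_eq_bernoulliFun (n : ℕ) (x : ℝ) : bernoulliPoly n x = bernoulliFun n x :=
  (Polynomial.eval_map_algebraMap _ _).symm

section Rolle

variable {f f' : ℝ → ℝ} {a b : ℝ}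

theorem injOn_Icc_of_hasDerivAt_ne_zero (hfc : ContinuousOn f (Icc a b))
    (hf : ∀ x ∈ Ioo a b, HasDerivAt f (f' x) x) (hf' : ∀ x ∈ Ioo a b, f' x ≠ 0) :
    InjOn f (Icc a b) := by
  have hlt : ∀ x ∈ Icc a b, ∀ y ∈ Icc a b, x < y → f x ≠ f y := by
    intro x hx y hy hxy hfxy
    have hsub : Ioo x y ⊆ Ioo a b := Ioo_subset_Ioo hx.1 hy.2
    obtain ⟨c, hc, hfc'⟩ := exists_hasDerivAt_eq_zero hxy
      (hfc.mono (Icc_subset_Icc hx.1 hy.2)) hfxy fun z hz => hf z (hsub hz)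
    exact hf' c (hsub hc) hfc'
  intro x hx y hy hfxy
  by_contra hne
  rcases lt_or_gt_of_ne hne with hxy | hxy
  · exact hlt x hx y hy hxy hfxy
  · exact hlt y hy x hx hxy hfxy.symm

theorem ne_zero_on_Ioo_of_injOn_deriv (hfc : ContinuousOn f (Icc a b))
    (hf : ∀ x ∈ Ioo a b, HasDerivAt f (f' x) x) (hfa : f a = 0) (hfb : f b = 0)
    (hf' : InjOn f' (Icc a b)) : ∀ x ∈ Ioo a b, f x ≠ 0 := by
  intro z hz hfz
  obtain ⟨c₁, hc₁, hfc₁⟩ := exists_hasDerivAt_eq_zero hz.1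
    (hfc.mono (Icc_subset_Icc_right hz.2.le)) (hfa.trans hfz.symm)
    fun x hx => hf x (Ioo_subset_Ioo_right hz.2.le hx)
  obtain ⟨c₂, hc₂, hfc₂⟩ := exists_hasDerivAt_eq_zero hz.2
    (hfc.mono (Icc_subset_Icc_left hz.1.le)) (hfz.trans hfb.symm)
    fun x hx => hf x (Ioo_subset_Ioo_left hz.1.le hx)
  have hc : c₁ = c₂ := hf' ⟨hc₁.1.le, (hc₁.2.trans hz.2).le⟩ ⟨(hz.1.trans hc₂.1).le, hc₂.2.le⟩
    (hfc₁.trans hfc₂.symm)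
  exact (hc₁.2.trans hc₂.1).ne hc

end Rolle

theorem hasDerivAt_bernoulliFun_succ (k : ℕ) (x : ℝ) :
    HasDerivAt (bernoulliFun (k + 1)) ((k + 1 : ℕ) * bernoulliFun k x) x := by
  simpa using hasDerivAt_bernoulliFun (k + 1) x

theorem injOn_bernoulliFun_succ {k : ℕ} {a b : ℝ} (hk : ∀ x ∈ Ioo a b, bernoulliFun k x ≠ 0) :
    InjOn (bernoulliFun (k + 1)) (Icc a b) :=
  injOn_Icc_of_hasDerivAt_ne_zero (continuous_bernoulliFun _).continuousOn
    (fun x _ => hasDerivAt_bernoulliFun_succ k x) fun x hx =>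
      mul_ne_zero (Nat.cast_ne_zero.2 k.succ_ne_zero) (hk x hx)

theorem bernoulliFun_odd_eval_zero (m : ℕ) : bernoulliFun (2 * m + 3) 0 = 0 := by
  rw [bernoulliFun_eval_zero, bernoulli_eq_zero_of_odd ⟨m + 1, by ring⟩ (by omega), Rat.cast_zero]

theorem bernoulliFun_odd_eval_half (m : ℕ) : bernoulliFun (2 * m + 1) (1 / 2) = 0 := by
  rw [one_div, bernoulliFun_eval_half_eq_zero]

theorem bernoulliFun_odd_ne_zero (m : ℕ) :
    ∀ x ∈ Ioo (0 : ℝ) (1 / 2), bernoulliFun (2 * m + 1) x ≠ 0 := by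
  induction m with
  | zero =>
    intro x hx
    rw [mul_zero, zero_add, bernoulliFun_one]
    linarith [hx.2]
  | succ m ih =>
    have hinj : InjOn (fun y => ((2 * m + 3 : ℕ) : ℝ) * bernoulliFun (2 * m + 2) y)
        (Icc 0 (1 / 2)) :=
      (mul_right_injective₀ (Nat.cast_ne_zero.2 (by omega))).comp_injOn (injOn_bernoulliFun_succ ih)
    exact ne_zero_on_Ioo_of_injOn_deriv (continuous_bernoulliFun _).continuousOn
      (fun x _ => hasDerivAt_bernoulliFun_succ (2 * m + 2) x)
      (bernoulliFun_odd_eval_zero m) (bernoulliFun_odd_eval_half (m + 1)) hinj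

theorem exists_bernoulliFun_even_eq_zero_iff (m : ℕ) :
    ∃ c ∈ Ioo (0 : ℝ) (1 / 2),
      ∀ x ∈ Icc (0 : ℝ) (1 / 2), bernoulliFun (2 * m + 2) x = 0 ↔ x = c := by
  obtain ⟨c, hc, hc0⟩ := exists_hasDerivAt_eq_zero (by norm_num : (0 : ℝ) < 1 / 2)
    (continuous_bernoulliFun _).continuousOn
    ((bernoulliFun_odd_eval_zero m).trans (bernoulliFun_odd_eval_half (m + 1)).symm)
    fun x _ => hasDerivAt_bernoulliFun_succ (2 * m + 2) x
  have hBc : bernoulliFun (2 * m + 2) c = 0 :=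
    (mul_eq_zero.1 hc0).resolve_left (Nat.cast_ne_zero.2 (by omega))
  refine ⟨c, hc, fun x hx => ⟨fun hBx => ?_, fun hxc => hxc ▸ hBc⟩⟩
  exact injOn_bernoulliFun_succ (bernoulliFun_odd_ne_zero m) hx (Ioo_subset_Icc_self hc)
    (hBx.trans hBc.symm)

theorem existsUnique_bernoulliFun_even_eq_zero (m : ℕ) :
    (∃! x : ℝ, x ∈ Ico 0 (1 / 2) ∧ bernoulliFun (2 * m + 2) x = 0) ∧
      ∃! x : ℝ, x ∈ Ioc 0 (1 / 2) ∧ bernoulliFun (2 * m + 2) x = 0 := by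
  obtain ⟨c, hc, hzero⟩ := exists_bernoulliFun_even_eq_zero_iff m
  have hBc := (hzero c (Ioo_subset_Icc_self hc)).2 rfl
  exact ⟨⟨c, ⟨Ioo_subset_Ico_self hc, hBc⟩,
      fun y hy => (hzero y (Ico_subset_Icc_self hy.1)).1 hy.2⟩,
    ⟨c, ⟨Ioo_subset_Ioc_self hc, hBc⟩, fun y hy => (hzero y (Ioc_subset_Icc_self hy.1)).1 hy.2⟩⟩

theorem existsUnique_bernoulliFun_odd_eq_zero (m : ℕ) :
    (∃! x : ℝ, x ∈ Ico 0 (1 / 2) ∧ bernoulliFun (2 * m + 3) x = 0) ∧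
      ∃! x : ℝ, x ∈ Ioc 0 (1 / 2) ∧ bernoulliFun (2 * m + 3) x = 0 := by
  have hne := bernoulliFun_odd_ne_zero (m + 1)
  refine ⟨⟨0, ⟨by norm_num, bernoulliFun_odd_eval_zero m⟩, fun y ⟨hy, hy0⟩ => ?_⟩,
    ⟨1 / 2, ⟨by norm_num, bernoulliFun_odd_eval_half (m + 1)⟩, fun y ⟨hy, hy0⟩ => ?_⟩⟩
  · by_contra h
    exact hne y ⟨lt_of_le_of_ne hy.1 (Ne.symm h), hy.2⟩ hy0
  · by_contra h
    exact hne y ⟨hy.1, lt_of_le_of_ne hy.2 h⟩ hy0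

theorem existsUnique_bernoulliFun_eq_zero_Ico_half_one_iff (n : ℕ) :
    (∃! x : ℝ, x ∈ Ico (1 / 2) 1 ∧ bernoulliFun n x = 0) ↔
      ∃! x : ℝ, x ∈ Ioc 0 (1 / 2) ∧ bernoulliFun n x = 0 := by
  refine (Equiv.subLeft (1 : ℝ)).existsUnique_congr fun x => ?_
  rw [Equiv.subLeft_apply, bernoulliFun_eval_one_sub, mul_eq_zero_iff_left (by simp)]
  constructor <;> rintro ⟨⟨h₁, h₂⟩, h⟩ <;> refine ⟨⟨?_, ?_⟩, h⟩ <;> linarith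

/-- For every integer `n ≥ 2`, the Bernoulli polynomial `B_n` has exactly one root in
`[0, 1/2)` and exactly one root in `[1/2, 1)`. -/
theorem bernoulli_poly_exactly_one_root (n : ℕ) (hn : 2 ≤ n) :
    (∃! x : ℝ, x ∈ Set.Ico (0 : ℝ) (1 / 2) ∧ bernoulliPoly n x = 0) ∧
      (∃! x : ℝ, x ∈ Set.Ico (1 / 2 : ℝ) 1 ∧ bernoulliPoly n x = 0) := by
  simp only [bernoulliPoly_eq_bernoulliFun, existsUnique_bernoulliFun_eq_zero_Ico_half_one_iff]
  obtain ⟨m, rfl | rfl⟩ : ∃ m, n = 2 * m + 2 ∨ n = 2 * m + 3 := ⟨(n - 2) / 2, by omega⟩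
  · exact existsUnique_bernoulliFun_even_eq_zero m
  · exact existsUnique_bernoulliFun_odd_eq_zero m
end

section
/- Let k be a positive integer and let b⁻ ∈ [0, 1/2) and b⁺ ∈ [1/2, 1) be the roots of the Bernoulli polynomial B_{2k} in those intervals. Then (−1)^{k−1} B_{2k}(x) > 0 for all x with 0 ≤ x < b⁻ or b⁺ < x ≤ 1, and (−1)^{k−1} B_{2k}(x) < 0 for all x with b⁻ < x < b⁺. -/
/-
For `m ≥ 0` the function `(-1)^(m+1) B_{2m+1}` is positive on `(0, 1/2)`: it vanishes at `0` and
at `1/2`, and its second derivative is a negative multiple of the previous function of the same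
family, so by induction it is strictly concave there. Consequently `(-1)^(k-1) B_{2k}`, whose
derivative is a negative multiple of `(-1)^k B_{2k-1}`, is strictly decreasing on `[0, 1/2]`, and
it is symmetric about `1/2`. Its roots in `[0, 1)` are therefore `b⁻` and `b⁺ = 1 - b⁻`, and its
sign on `[0, 1]` is read off from `min x (1 - x)`.
-/

open HurwitzZeta Polynomial Set

theorem bernoulliFun_eval_zero_of_odd {n : ℕ} (hn : Odd n) (h1 : 1 < n) :
    bernoulliFun n 0 = 0 := by
  rw [bernoulliFun_eval_zero, bernoulli_eq_zero_of_odd hn h1, Rat.cast_zero]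

theorem StrictConcaveOn.pos_of_eq_zero {f : ℝ → ℝ} {a b : ℝ} (hf : StrictConcaveOn ℝ (Icc a b) f)
    (ha : f a = 0) (hb : f b = 0) {x : ℝ} (hx : x ∈ Ioo a b) : 0 < f x := by
  have hab : a < b := hx.1.trans hx.2
  simpa [ha, hb] using hf.lt_on_openSegment (left_mem_Icc.2 hab.le) (right_mem_Icc.2 hab.le)
    hab.ne (by rwa [openSegment_eq_Ioo hab])

theorem neg_one_pow_mul_bernoulliFun_odd_pos (m : ℕ) {x : ℝ} (hx : x ∈ Ioo (0 : ℝ) (1 / 2)) :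
    0 < (-1) ^ (m + 1) * bernoulliFun (2 * m + 1) x := by
  induction m generalizing x with
  | zero => simp only [zero_add, pow_one, bernoulliFun_one, mul_zero]; linarith [hx.2]
  | succ m ih =>
    set f : ℝ → ℝ := fun y ↦ (-1) ^ (m + 2) * bernoulliFun (2 * m + 3) y
    have hf'' (y : ℝ) : deriv^[2] f y =
        -((2 * m + 3) * (2 * m + 2)) * ((-1) ^ (m + 1) * bernoulliFun (2 * m + 1) y) := by
      rw [Function.iterate_succ_apply', Function.iterate_one]
      simp only [f, deriv_const_mul_field', deriv_bernoulliFun]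
      push_cast
      ring
    have hconcave : StrictConcaveOn ℝ (Icc 0 (1 / 2)) f := by
      refine strictConcaveOn_of_deriv2_neg (convex_Icc _ _) (by fun_prop) fun y hy ↦ ?_
      rw [interior_Icc] at hy
      rw [hf'']
      have := ih hy
      have : (0 : ℝ) < (2 * m + 3) * (2 * m + 2) := by positivity
      nlinarith
    refine hconcave.pos_of_eq_zero ?_ ?_ hx
    · simp [f, bernoulliFun_eval_zero_of_odd (n := 2 * m + 3) ⟨m + 1, by ring⟩ (by omega)]
    · simp [f, one_div, show 2 * m + 3 = 2 * (m + 1) + 1 by ring, bernoulliFun_eval_half_eq_zero]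

theorem neg_one_pow_mul_bernoulliFun_even_strictAntiOn (m : ℕ) :
    StrictAntiOn (fun x ↦ (-1) ^ m * bernoulliFun (2 * m + 2) x) (Icc 0 (1 / 2)) := by
  refine strictAntiOn_of_deriv_neg (convex_Icc _ _) (by fun_prop) fun x hx ↦ ?_
  rw [interior_Icc] at hx
  have hderiv : deriv (fun x ↦ (-1) ^ m * bernoulliFun (2 * m + 2) x) x =
      -(2 * m + 2) * ((-1) ^ (m + 1) * bernoulliFun (2 * m + 1) x) := by
    simp only [deriv_const_mul_field', deriv_bernoulliFun]
    push_cast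
    ring
  rw [hderiv]
  have := neg_one_pow_mul_bernoulliFun_odd_pos m hx
  have : (0 : ℝ) < 2 * m + 2 := by positivity
  nlinarith

section SymmetricAboutHalf

variable {g : ℝ → ℝ} (hanti : StrictAntiOn g (Icc 0 (1 / 2))) (hsymm : ∀ x, g (1 - x) = g x)
  {b : ℝ} (hb : b ∈ Icc (0 : ℝ) (1 / 2)) (hgb : g b = 0)

include hsymm in
theorem apply_eq_apply_min_one_sub (x : ℝ) : g x = g (min x (1 - x)) := by
  rcases min_choice x (1 - x) with h | h <;> rw [h]
  exact (hsymm x).symm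

theorem min_one_sub_mem_Icc {x : ℝ} (hx : x ∈ Icc (0 : ℝ) 1) :
    min x (1 - x) ∈ Icc (0 : ℝ) (1 / 2) := by
  refine ⟨le_min hx.1 (by linarith [hx.2]), ?_⟩
  rcases le_total x (1 / 2) with h | h
  exacts [min_le_of_left_le h, min_le_of_right_le (by linarith)]

include hanti hsymm hb hgb

theorem pos_iff_of_symm {x : ℝ} (hx : x ∈ Icc (0 : ℝ) 1) : 0 < g x ↔ x < b ∨ 1 - b < x := by
  rw [apply_eq_apply_min_one_sub hsymm, ← hgb, hanti.lt_iff_gt hb (min_one_sub_mem_Icc hx), min_lt_iff,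
    sub_lt_comm]

theorem neg_iff_of_symm {x : ℝ} (hx : x ∈ Icc (0 : ℝ) 1) : g x < 0 ↔ b < x ∧ x < 1 - b := by
  rw [apply_eq_apply_min_one_sub hsymm, ← hgb, hanti.lt_iff_gt (min_one_sub_mem_Icc hx) hb, lt_min_iff,
    lt_sub_comm]

end SymmetricAboutHalf

/-- For a positive integer `k`, with `b⁻ ∈ [0,1/2)` and `b⁺ ∈ [1/2,1)` the roots of
`B_{2k}` in those intervals: `(-1)^(k-1) B_{2k}(x) > 0` for `0 ≤ x < b⁻` or `b⁺ < x ≤ 1`,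
and `(-1)^(k-1) B_{2k}(x) < 0` for `b⁻ < x < b⁺`. -/
theorem bernoulli_even_sign (k : ℕ) (hk : 0 < k) (bm bp : ℝ)
    (hbm : bm ∈ Set.Ico (0 : ℝ) (1 / 2)) (hbm0 : bernoulliPoly (2 * k) bm = 0)
    (hbp : bp ∈ Set.Ico (1 / 2 : ℝ) 1) (hbp0 : bernoulliPoly (2 * k) bp = 0) :
    (∀ x : ℝ, (0 ≤ x ∧ x < bm) ∨ (bp < x ∧ x ≤ 1) →
        0 < (-1 : ℝ) ^ (k - 1) * bernoulliPoly (2 * k) x) ∧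
      (∀ x : ℝ, bm < x → x < bp → (-1 : ℝ) ^ (k - 1) * bernoulliPoly (2 * k) x < 0) := by
  obtain ⟨m, rfl⟩ := Nat.exists_eq_add_one.2 hk
  simp only [bernoulliPoly_eq_bernoulliFun, Nat.add_sub_cancel,
    show 2 * (m + 1) = 2 * m + 2 by ring] at hbm0 hbp0 ⊢
  set g : ℝ → ℝ := fun x ↦ (-1) ^ m * bernoulliFun (2 * m + 2) x
  have hanti : StrictAntiOn g (Icc 0 (1 / 2)) := neg_one_pow_mul_bernoulliFun_even_strictAntiOn m
  have hsymm (x : ℝ) : g (1 - x) = g x := by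
    have heven : Even (2 * m + 2) := ⟨m + 1, by ring⟩
    simp only [g, bernoulliFun_eval_one_sub, heven.neg_one_pow, one_mul]
  have hbm' : bm ∈ Icc (0 : ℝ) (1 / 2) := Ico_subset_Icc_self hbm
  have hgbm : g bm = 0 := by simp [g, hbm0]
  have hgbp : g bp = 0 := by simp [g, hbp0]
  have hbp_eq : bp = 1 - bm := by
    have : 1 - bp = bm := hanti.injOn ⟨by linarith [hbp.2], by linarith [hbp.1]⟩ hbm'
      ((hsymm bp).trans (hgbp.trans hgbm.symm))
    linarith
  subst hbp_eq
  constructor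
  · rintro x (⟨hx0, hx⟩ | ⟨hx, hx1⟩)
    · exact (pos_iff_of_symm hanti hsymm hbm' hgbm ⟨hx0, by linarith [hbm.2]⟩).2 (.inl hx)
    · exact (pos_iff_of_symm hanti hsymm hbm' hgbm ⟨by linarith [hbp.1], hx1⟩).2 (.inr hx)
  · intro x hx hx'
    exact (neg_iff_of_symm hanti hsymm hbm' hgbm ⟨by linarith [hbm.1], by linarith [hbp.2]⟩).2
      ⟨hx, hx'⟩
end

section
/- Let b₄⁺ ∈ [1/2, 1) be the root of the fourth Bernoulli polynomial B₄ in that interval, and suppose 1/2 ≤ a ≤ b₄⁺. Then ζ(σ, a) < 0 for every real σ with −4 < σ < −3. -/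
/-!
Put `t = 1 - σ ∈ (4, 5)`. The functional equation writes `ζ(1 - t, a)` as the positive factor
`2 (2π)^(-t) Γ(t)` times `cos(πt/2) C_t + sin(πt/2) S_t`, where `C_t` and `S_t` are the cosine and
sine Dirichlet series `∑ cos(2πna)/n^t` and `∑ sin(2πna)/n^t`. Since `∑_{n ≥ 2} n⁻³ ≤ 1/4`,
comparing with `t = 4` termwise gives `C_t ≤ C_4 + (t - 4)/4`, where `C_4 = -(π⁴/3) B₄(a) ≤ 0`
because `B₄` decreases on `[1/2, 1]`, and `S_t ≤ (3/4) sin 2πa ≤ 0`. On `(4, 5)`,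
`cos(πt/2) ∈ (0, 1]` and `sin(πt/2) ≥ t - 4`. If `a ≤ 2/3`, then `B₄(a)` is large enough to make
`C_t < 0`; otherwise `2/3 < a ≤ b₄⁺ < 5/6`, so `sin 2πa < -1/3` and the sine term wins.
-/

open HurwitzZeta Polynomial Set

open Real

lemma sum_range_one_div_add_two_pow_three_le (N : ℕ) :
    ∑ i ∈ Finset.range N, 1 / ((i : ℝ) + 2) ^ 3 ≤ 1 / 4 := by
  set f : ℕ → ℝ := fun i ↦ 1 / (2 * ((i : ℝ) + 1) * ((i : ℝ) + 2))
  have hstep (i : ℕ) : 1 / ((i : ℝ) + 2) ^ 3 ≤ f i - f (i + 1) := by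
    have hf : f i - f (i + 1) = 1 / (((i : ℝ) + 1) * ((i : ℝ) + 2) * ((i : ℝ) + 3)) := by
      simp only [f]; push_cast; field_simp; ring
    rw [hf]
    exact one_div_le_one_div_of_le (by positivity) (by nlinarith)
  calc ∑ i ∈ Finset.range N, 1 / ((i : ℝ) + 2) ^ 3
      ≤ ∑ i ∈ Finset.range N, (f i - f (i + 1)) := Finset.sum_le_sum fun i _ ↦ hstep i
    _ = f 0 - f N := Finset.sum_range_sub' f N
    _ ≤ 1 / 4 := by
      simp only [f]; norm_num; positivity

lemma HasSum.le_add_of_abs_le_div_pow_three {f : ℕ → ℝ} {T K : ℝ} (hf : HasSum f T)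
    (hK : ∀ n, 2 ≤ n → |f n| ≤ K / (n : ℝ) ^ 3) : T ≤ f 0 + f 1 + K / 4 := by
  have hK0 : 0 ≤ K := by
    have := (abs_nonneg _).trans (hK 2 le_rfl)
    norm_num at this
    linarith
  have htail : HasSum (fun n ↦ f (n + 2)) (T - (f 0 + f 1)) := by
    simpa [Finset.sum_range_succ] using (hasSum_nat_add_iff' 2).mpr hf
  have hsummable : Summable fun n : ℕ ↦ 1 / ((n : ℝ) + 2) ^ 3 := by
    simpa using (summable_nat_add_iff 2).mpr (summable_one_div_nat_pow.mpr (by norm_num : 1 < 3))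
  have hbound : T - (f 0 + f 1) ≤ K * ∑' n : ℕ, 1 / ((n : ℝ) + 2) ^ 3 := by
    rw [← tsum_mul_left]
    refine hasSum_le (fun n ↦ ?_) htail (hsummable.mul_left K).hasSum
    have := (le_abs_self _).trans (hK (n + 2) (by omega))
    simpa [div_eq_mul_inv] using this
  have := hsummable.tsum_le_of_sum_range_le sum_range_one_div_add_two_pow_three_le
  nlinarith

lemma abs_sin_nat_mul_le (n : ℕ) (x : ℝ) : |sin (n * x)| ≤ n * |sin x| := by
  induction n with
  | zero => simp
  | succ n ih =>
    rw [Nat.cast_succ, add_one_mul, sin_add]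
    calc |sin (n * x) * cos x + cos (n * x) * sin x|
        ≤ |sin (n * x)| * |cos x| + |cos (n * x)| * |sin x| := by
          rw [← abs_mul, ← abs_mul]; exact abs_add_le _ _
      _ ≤ n * |sin x| * 1 + 1 * |sin x| := by
          gcongr <;> exact abs_cos_le_one _
      _ = (n + 1) * |sin x| := by ring

lemma one_div_rpow_sub_one_div_rpow_le {m : ℝ} (hm : 0 < m) (s t : ℝ) :
    1 / m ^ s - 1 / m ^ t ≤ (t - s) * log m / m ^ s := by
  have hsplit : 1 / m ^ t = 1 / m ^ s * exp (-((t - s) * log m)) := by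
    rw [show t = s + (t - s) by ring, rpow_add hm, rpow_def_of_pos hm (t - s), exp_neg]
    ring_nf
  have hexp : 1 - exp (-((t - s) * log m)) ≤ (t - s) * log m := by
    linarith [add_one_le_exp (-((t - s) * log m))]
  calc 1 / m ^ s - 1 / m ^ t = 1 / m ^ s * (1 - exp (-((t - s) * log m))) := by
        rw [hsplit]; ring
    _ ≤ 1 / m ^ s * ((t - s) * log m) := by gcongr
    _ = (t - s) * log m / m ^ s := by ring

lemma le_add_of_hasSum_cos_div_rpow {a s t Cs Ct : ℝ} (hs : 4 ≤ s) (hst : s ≤ t)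
    (hCs : HasSum (fun n : ℕ ↦ cos (2 * π * a * n) / (n : ℝ) ^ s) Cs)
    (hCt : HasSum (fun n : ℕ ↦ cos (2 * π * a * n) / (n : ℝ) ^ t) Ct) :
    Ct ≤ Cs + (t - s) / 4 := by
  have h := (hCt.sub hCs).le_add_of_abs_le_div_pow_three (K := t - s) fun n hn ↦ ?_
  · simp only [Nat.cast_zero, Nat.cast_one, mul_zero, mul_one, one_rpow, div_one, sub_self,
      zero_rpow (show t ≠ 0 by linarith), zero_rpow (show s ≠ 0 by linarith), div_zero,
      zero_add] at h
    linarith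
  have hn1 : (1 : ℝ) ≤ n := by exact_mod_cast (by omega : 1 ≤ n)
  have hn0 : (0 : ℝ) < n := by linarith
  have hmono : 1 / (n : ℝ) ^ t ≤ 1 / (n : ℝ) ^ s :=
    one_div_le_one_div_of_le (by positivity) (rpow_le_rpow_of_exponent_le hn1 hst)
  have hpow : (n : ℝ) ^ 4 ≤ (n : ℝ) ^ s := by
    exact_mod_cast rpow_le_rpow_of_exponent_le hn1 hs
  calc |cos (2 * π * a * n) / (n : ℝ) ^ t - cos (2 * π * a * n) / (n : ℝ) ^ s|
      = |cos (2 * π * a * n)| * (1 / (n : ℝ) ^ s - 1 / (n : ℝ) ^ t) := by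
        rw [← abs_of_nonneg (sub_nonneg.2 hmono), ← abs_mul, ← abs_neg]; ring_nf
    _ ≤ 1 * ((t - s) * log n / (n : ℝ) ^ s) :=
        mul_le_mul (abs_cos_le_one _) (one_div_rpow_sub_one_div_rpow_le hn0 s t)
          (sub_nonneg.2 hmono) zero_le_one
    _ ≤ (t - s) * n / (n : ℝ) ^ 4 := by
        rw [one_mul]
        have hlog : log n ≤ n := (log_le_sub_one_of_pos hn0).trans (by linarith)
        exact div_le_div₀ (by nlinarith) (mul_le_mul_of_nonneg_left hlog (by linarith))
          (by positivity) hpow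
    _ = (t - s) / (n : ℝ) ^ 3 := by field_simp

lemma le_of_hasSum_sin_div_rpow {a t S : ℝ} (ht : 4 ≤ t)
    (hS : HasSum (fun n : ℕ ↦ sin (2 * π * a * n) / (n : ℝ) ^ t) S) :
    S ≤ sin (2 * π * a) + |sin (2 * π * a)| / 4 := by
  have h := hS.le_add_of_abs_le_div_pow_three (K := |sin (2 * π * a)|) fun n hn ↦ ?_
  · simpa [zero_rpow (show t ≠ 0 by linarith)] using h
  have hn1 : (1 : ℝ) ≤ n := by exact_mod_cast (by omega : 1 ≤ n)
  have hpow : (n : ℝ) ^ 4 ≤ (n : ℝ) ^ t := by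
    exact_mod_cast rpow_le_rpow_of_exponent_le hn1 ht
  calc |sin (2 * π * a * n) / (n : ℝ) ^ t| = |sin (n * (2 * π * a))| / (n : ℝ) ^ t := by
        rw [abs_div, abs_of_pos (rpow_pos_of_pos (by linarith) t), mul_comm]
    _ ≤ n * |sin (2 * π * a)| / (n : ℝ) ^ 4 := by
        gcongr
        exact abs_sin_nat_mul_le n _
    _ = |sin (2 * π * a)| / (n : ℝ) ^ 3 := by field_simp

lemma Complex.ofReal_re_eq_of_hasSum_ofReal {f : ℕ → ℝ} {c : ℂ}
    (h : HasSum (fun n ↦ (f n : ℂ)) c) : (c.re : ℂ) = c :=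
  Complex.ext rfl (by simpa using (hasSum_zero.unique (by simpa using Complex.hasSum_im h)))

lemma Complex.hasSum_re_of_hasSum_ofReal {f : ℕ → ℝ} {c : ℂ}
    (h : HasSum (fun n ↦ (f n : ℂ)) c) : HasSum f c.re := by
  simpa using Complex.hasSum_re h

lemma hasSum_nat_cosZeta_ofReal (a : ℝ) {t : ℝ} (ht : 1 < t) :
    HasSum (fun n : ℕ ↦ ((cos (2 * π * a * n) / (n : ℝ) ^ t : ℝ) : ℂ)) (cosZeta a t) := by
  refine (hasSum_nat_cosZeta a (by simpa using ht)).congr_fun fun n ↦ ?_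
  push_cast [Complex.ofReal_cpow (Nat.cast_nonneg n)]
  rfl

lemma hasSum_nat_sinZeta_ofReal (a : ℝ) {t : ℝ} (ht : 1 < t) :
    HasSum (fun n : ℕ ↦ ((sin (2 * π * a * n) / (n : ℝ) ^ t : ℝ) : ℂ)) (sinZeta a t) := by
  refine (hasSum_nat_sinZeta a (by simpa using ht)).congr_fun fun n ↦ ?_
  push_cast [Complex.ofReal_cpow (Nat.cast_nonneg n)]
  rfl

lemma hurwitzZeta_one_sub_ofReal (a : ℝ) {t : ℝ} (ht : 1 < t) :
    hurwitzZeta a (1 - t) = ((2 * (2 * π) ^ (-t) * Gamma t *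
      (cos (π * t / 2) * (cosZeta a t).re + sin (π * t / 2) * (sinZeta a t).re) : ℝ) : ℂ) := by
  have hnat (n : ℕ) : (t : ℂ) ≠ -n := fun h ↦ by
    have : t = -n := by exact_mod_cast h
    linarith [(Nat.cast_nonneg n : (0 : ℝ) ≤ n)]
  have hne : (t : ℂ) ≠ 1 := fun h ↦ by
    have : t = 1 := by exact_mod_cast h
    linarith
  rw [hurwitzZeta, hurwitzZetaEven_one_sub _ hnat (.inr hne), hurwitzZetaOdd_one_sub _ hnat]
  conv_lhs => rw [← Complex.ofReal_re_eq_of_hasSum_ofReal (hasSum_nat_cosZeta_ofReal a ht),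
    ← Complex.ofReal_re_eq_of_hasSum_ofReal (hasSum_nat_sinZeta_ofReal a ht)]
  push_cast [Complex.ofReal_cpow (by positivity : (0 : ℝ) ≤ 2 * π), Complex.Gamma_ofReal]
  ring

lemma bernoulliPoly_four (x : ℝ) : bernoulliPoly 4 x = (x * (1 - x)) ^ 2 - 1 / 30 := by
  norm_num [bernoulliPoly, Polynomial.bernoulli, Finset.sum_range_succ,
    bernoulli_eq_bernoulli'_of_ne_one, bernoulli'_four, Nat.choose]
  ring

lemma hasSum_cos_div_rpow_four {a : ℝ} (ha : a ∈ Icc 0 1) :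
    HasSum (fun n : ℕ ↦ cos (2 * π * a * n) / (n : ℝ) ^ (4 : ℝ))
      (-(π ^ 4 / 3) * bernoulliPoly 4 a) := by
  convert hasSum_one_div_nat_pow_mul_cos (k := 2) two_ne_zero ha using 1
  · ext n
    rw [rpow_ofNat]
    ring_nf
  · rw [bernoulliPoly, aeval_def, eval₂_eq_eval_map]
    norm_num [Nat.factorial]
    ring

lemma bernoulliPoly_four_antitoneOn : AntitoneOn (bernoulliPoly 4) (Icc (1 / 2) 1) := by
  intro x ⟨hx, hx1⟩ y ⟨_, hy1⟩ hxy
  have hprod : y * (1 - y) ≤ x * (1 - x) := by nlinarith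
  rw [bernoulliPoly_four, bernoulliPoly_four]
  gcongr

lemma lt_five_div_six_of_bernoulliPoly_four_eq_zero {b : ℝ} (hb : b ∈ Ico (1 / 2) 1)
    (hb0 : bernoulliPoly 4 b = 0) : b < 5 / 6 := by
  by_contra! h
  have := bernoulliPoly_four_antitoneOn ⟨by norm_num, by norm_num⟩ (Ico_subset_Icc_self hb) h
  norm_num [bernoulliPoly_four, hb0] at this

lemma quarter_lt_pi_pow_four_div_three_mul_bernoulliPoly_four {a : ℝ} (ha : 1 / 2 ≤ a)
    (ha' : a ≤ 2 / 3) : 1 / 4 < π ^ 4 / 3 * bernoulliPoly 4 a := by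
  have hB : 13 / 810 ≤ bernoulliPoly 4 a := by
    have := bernoulliPoly_four_antitoneOn ⟨ha, by linarith⟩ ⟨by norm_num, by norm_num⟩ ha'
    norm_num [bernoulliPoly_four] at this ⊢
    linarith
  have hπ : 3 ^ 4 < π ^ 4 := by gcongr; exact pi_gt_three
  nlinarith

lemma sin_two_pi_mul_lt {a : ℝ} (ha : 2 / 3 ≤ a) (ha' : a ≤ 5 / 6) :
    sin (2 * π * a) < -1 / 3 := by
  set x := π * (2 * a - 3 / 2)
  have hsin : sin (2 * π * a) = -cos x := by
    rw [show 2 * π * a = x + π / 2 + π by ring, sin_add_pi, sin_add_pi_div_two]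
  have hx : x ^ 2 < 10 / 36 := by
    have hπ : π ^ 2 < 10 := by nlinarith [pi_lt_d2, pi_pos]
    have : (2 * a - 3 / 2) ^ 2 ≤ 1 / 36 := by nlinarith
    calc x ^ 2 = π ^ 2 * (2 * a - 3 / 2) ^ 2 := by ring
      _ ≤ π ^ 2 * (1 / 36) := by gcongr
      _ < 10 * (1 / 36) := by gcongr
      _ = 10 / 36 := by norm_num
  linarith [one_sub_sq_div_two_le_cos (x := x)]

lemma sin_two_pi_mul_nonpos {a : ℝ} (ha : 1 / 2 ≤ a) (ha' : a ≤ 1) : sin (2 * π * a) ≤ 0 := by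
  rw [← sin_sub_two_pi]
  apply sin_nonpos_of_nonpos_of_neg_pi_le <;> nlinarith [pi_pos]

lemma cos_mul_add_sin_mul_neg {t C S : ℝ} (ht4 : 4 < t) (ht5 : t < 5) (hC : C ≤ (t - 4) / 4)
    (hS : S ≤ 0) (h : C < 0 ∨ S < -1 / 4) : cos (π * t / 2) * C + sin (π * t / 2) * S < 0 := by
  set y := t - 4
  have harg : π * t / 2 = π * y / 2 + 2 * π := by ring
  rw [harg, cos_add_two_pi, sin_add_two_pi]
  have hP : 0 < cos (π * y / 2) :=
    cos_pos_of_mem_Ioo ⟨by nlinarith [pi_pos], by nlinarith [pi_pos]⟩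
  have hP1 : cos (π * y / 2) ≤ 1 := cos_le_one _
  have hQ : y ≤ sin (π * y / 2) := by
    have := mul_le_sin (x := π * y / 2) (by nlinarith [pi_pos]) (by nlinarith [pi_pos])
    rwa [show 2 / π * (π * y / 2) = y by field_simp] at this
  rcases h with hC0 | hS4
  · nlinarith
  · rcases le_or_gt C 0 with hC0 | hC0 <;> nlinarith

lemma cos_mul_cosZeta_re_add_sin_mul_sinZeta_re_neg {b a t : ℝ} (hb : b ∈ Ico (1 / 2) 1)
    (hb0 : bernoulliPoly 4 b = 0) (ha : 1 / 2 ≤ a) (hab : a ≤ b) (ht4 : 4 < t) (ht5 : t < 5) :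
    cos (π * t / 2) * (cosZeta a t).re + sin (π * t / 2) * (sinZeta a t).re < 0 := by
  have hb56 := lt_five_div_six_of_bernoulliPoly_four_eq_zero hb hb0
  have ha1 : a ≤ 1 := hab.trans hb.2.le
  have hB : 0 ≤ bernoulliPoly 4 a := by
    simpa [hb0] using bernoulliPoly_four_antitoneOn ⟨ha, ha1⟩ (Ico_subset_Icc_self hb) hab
  have hC := le_add_of_hasSum_cos_div_rpow le_rfl ht4.le
    (hasSum_cos_div_rpow_four ⟨by linarith, ha1⟩)
    (Complex.hasSum_re_of_hasSum_ofReal (hasSum_nat_cosZeta_ofReal a (by linarith)))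
  have hS := le_of_hasSum_sin_div_rpow ht4.le
    (Complex.hasSum_re_of_hasSum_ofReal (hasSum_nat_sinZeta_ofReal a (by linarith)))
  have hsin := sin_two_pi_mul_nonpos ha ha1
  rw [abs_of_nonpos hsin] at hS
  have hC4 : 0 ≤ π ^ 4 / 3 * bernoulliPoly 4 a := by positivity
  refine cos_mul_add_sin_mul_neg ht4 ht5 (by linarith) (by linarith) ?_
  rcases le_or_gt a (2 / 3) with ha23 | ha23
  · have := quarter_lt_pi_pow_four_div_three_mul_bernoulliPoly_four ha ha23
    left; linarith
  · have := sin_two_pi_mul_lt ha23.le (by linarith)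
    right; linarith

/-- With `b₄⁺ ∈ [1/2,1)` the root of `B₄` in that interval and `1/2 ≤ a ≤ b₄⁺`,
`ζ(σ, a) < 0` for every real `σ ∈ (-4, -3)`. -/
theorem hurwitzZeta_neg_on_Ioo_neg_four_neg_three (bp : ℝ)
    (hbp : bp ∈ Set.Ico (1 / 2 : ℝ) 1) (hbp0 : bernoulliPoly 4 bp = 0)
    (a : ℝ) (ha : 1 / 2 ≤ a) (ha' : a ≤ bp) :
    ∀ σ : ℝ, -4 < σ → σ < -3 →
      (hurwitzZeta (a : UnitAddCircle) (σ : ℂ)).im = 0 ∧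
        (hurwitzZeta (a : UnitAddCircle) (σ : ℂ)).re < 0 := by
  intro σ hσ4 hσ3
  have hσ : (σ : ℂ) = 1 - ((1 - σ : ℝ) : ℂ) := by push_cast; ring
  rw [hσ, hurwitzZeta_one_sub_ofReal a (by linarith), Complex.ofReal_im, Complex.ofReal_re]
  refine ⟨rfl, mul_neg_of_pos_of_neg ?_
    (cos_mul_cosZeta_re_add_sin_mul_sinZeta_re_neg hbp hbp0 ha ha' (by linarith) (by linarith))⟩
  have := Gamma_pos_of_pos (by linarith : 0 < 1 - σ)
  positivity
end
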